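/- arXiv:1101.1737 — 3 statements merged into one kernel-verified Lean document; each statement's English description precedes it below -/
import Mathlib

section
/- The improper integral ∫₀^∞ (e^s/2)(√(1 - e^{-2s}) - 1)² ds converges and equals (π - 3)/2. -/
/-!
Substituting `u = e^{-s}` turns the integral into `∫₀¹ (1 - √(1 - u²))² / (2u²) du`, and
`u/2 + u/(1 + √(1 - u²)) - arcsin u` is an elementary primitive of minus that integrand.
Its middle term equals `(1 - √(1 - u²)) / u`, but only this form is continuous at `u = 0`.
The primitive vanishes at `u = 0` and equals `(3 - π)/2` at `u = 1`.
-/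

open MeasureTheory Real Set Filter Topology

noncomputable def primitiveSqrtOneSubSq (u : ℝ) : ℝ :=
  u / 2 + u / (1 + √(1 - u ^ 2)) - arcsin u

theorem continuous_primitiveSqrtOneSubSq : Continuous primitiveSqrtOneSubSq := by
  unfold primitiveSqrtOneSubSq
  have hden : ∀ u : ℝ, 1 + √(1 - u ^ 2) ≠ 0 := fun u => by positivity
  fun_prop (disch := exact hden _)

theorem primitiveSqrtOneSubSq_zero : primitiveSqrtOneSubSq 0 = 0 := by
  simp [primitiveSqrtOneSubSq]

theorem primitiveSqrtOneSubSq_one : primitiveSqrtOneSubSq 1 = (3 - π) / 2 := by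
  simp [primitiveSqrtOneSubSq]
  ring

theorem hasDerivAt_primitiveSqrtOneSubSq {u : ℝ} (hu₀ : 0 < u) (hu₁ : u < 1) :
    HasDerivAt primitiveSqrtOneSubSq (-(√(1 - u ^ 2) - 1) ^ 2 / (2 * u ^ 2)) u := by
  have hpos : 0 < 1 - u ^ 2 := by nlinarith
  set w := √(1 - u ^ 2) with hw
  have hw₀ : 0 < w := sqrt_pos.mpr hpos
  have hw_sq : w ^ 2 = 1 - u ^ 2 := sq_sqrt hpos.le
  have hsqrt : HasDerivAt (fun u => √(1 - u ^ 2)) (-u / w) u := by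
    convert ((hasDerivAt_pow 2 u).const_sub 1).sqrt hpos.ne' using 1
    field_simp
    push_cast; ring
  have harcsin : HasDerivAt arcsin (1 / w) u := hasDerivAt_arcsin (by linarith) hu₁.ne
  have hprim : HasDerivAt primitiveSqrtOneSubSq
      (1 / 2 + (1 * (1 + w) - u * (0 + -u / w)) / (1 + w) ^ 2 - 1 / w) u :=
    (((hasDerivAt_id' u).div_const 2).add ((hasDerivAt_id' u).div
      ((hasDerivAt_const u 1).add hsqrt) (add_pos one_pos hw₀).ne')).sub harcsin
  refine hprim.congr_deriv ?_
  field_simp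
  linear_combination (2 * u ^ 2 + w ^ 3 - w) * hw_sq

theorem hasDerivAt_primitiveSqrtOneSubSq_exp_neg {s : ℝ} (hs : 0 < s) :
    HasDerivAt (fun s => primitiveSqrtOneSubSq (exp (-s)))
      (exp s / 2 * (√(1 - exp (-2 * s)) - 1) ^ 2) s := by
  have hexp_sq : exp (-2 * s) = exp (-s) ^ 2 := by rw [← exp_nat_mul]; ring_nf
  have hexp_inv : exp s = (exp (-s))⁻¹ := by rw [exp_neg, inv_inv]
  have hexp_lt_one : exp (-s) < 1 := exp_lt_one_iff.mpr (neg_neg_of_pos hs)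
  refine ((hasDerivAt_primitiveSqrtOneSubSq (exp_pos _) hexp_lt_one).comp s
    (hasDerivAt_neg s).exp).congr_deriv ?_
  rw [hexp_sq, hexp_inv]
  field_simp

theorem tendsto_primitiveSqrtOneSubSq_exp_neg_atTop :
    Tendsto (fun s => primitiveSqrtOneSubSq (exp (-s))) atTop (𝓝 0) := by
  have h := (continuous_primitiveSqrtOneSubSq.tendsto 0).comp tendsto_exp_neg_atTop_nhds_zero
  rwa [primitiveSqrtOneSubSq_zero] at h

/-- The improper integral `∫₀^∞ (e^s/2)(√(1 - e^{-2s}) - 1)² ds` converges and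
equals `(π - 3)/2`. -/
theorem integral_exp_sqrt_one_sub_exp :
    IntegrableOn (fun s : ℝ => Real.exp s / 2 * (Real.sqrt (1 - Real.exp (-2 * s)) - 1) ^ 2)
      (Ioi 0) volume ∧
    ∫ s in Ioi (0 : ℝ), Real.exp s / 2 * (Real.sqrt (1 - Real.exp (-2 * s)) - 1) ^ 2
      = (π - 3) / 2 := by
  have hcont : ContinuousWithinAt (fun s => primitiveSqrtOneSubSq (exp (-s))) (Ici 0) 0 :=
    (continuous_primitiveSqrtOneSubSq.comp (by fun_prop)).continuousWithinAt
  have hderiv := fun s (hs : s ∈ Ioi (0 : ℝ)) => hasDerivAt_primitiveSqrtOneSubSq_exp_neg hs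
  have hnonneg : ∀ s ∈ Ioi (0 : ℝ), 0 ≤ exp s / 2 * (√(1 - exp (-2 * s)) - 1) ^ 2 :=
    fun s _ => by positivity
  have hlim := tendsto_primitiveSqrtOneSubSq_exp_neg_atTop
  refine ⟨integrableOn_Ioi_deriv_of_nonneg hcont hderiv hnonneg hlim, ?_⟩
  rw [integral_Ioi_of_hasDerivAt_of_nonneg hcont hderiv hnonneg hlim, neg_zero, exp_zero,
    primitiveSqrtOneSubSq_one]
  ring
end

section
/- The function s ↦ √(sinh s) - e^{s/2}/√2 is square-integrable on (0, ∞), and hence the Wiener integral ∫₀^∞ (√(sinh s) - e^{s/2}/√2) dδ_s against a standard Brownian motion δ is a well-defined centered Gaussian random variable with variance (π-3)/2. -/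
/-!
Expanding the square, `(√(sinh s) - e^{s/2}/√2)² = eˢ - e⁻ˢ/2 - √(e²ˢ - 1)`, which has the
elementary antiderivative `eˢ + e⁻ˢ/2 - √(e²ˢ - 1) + arctan √(e²ˢ - 1)`. It equals `3/2` at `0`
and tends to `π/2` at `∞` (as `eˢ - √(e²ˢ - 1) = (eˢ + √(e²ˢ - 1))⁻¹ → 0`), so the integral of
the nonnegative square over `(0, ∞)` converges to `(π - 3)/2`.
-/

open MeasureTheory ProbabilityTheory Real Set Filter Topology

noncomputable def sqrtSinhSubExpHalf (s : ℝ) : ℝ := √(sinh s) - exp (s / 2) / √2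

noncomputable def sqrtSinhSubExpHalfSqAntideriv (s : ℝ) : ℝ :=
  exp s + exp (-s) / 2 - √(exp s ^ 2 - 1) + arctan √(exp s ^ 2 - 1)

lemma sub_sqrt_sq_sub_one_eq_inv {a : ℝ} (ha : 1 ≤ a) :
    a - √(a ^ 2 - 1) = (a + √(a ^ 2 - 1))⁻¹ := by
  have hroot : √(a ^ 2 - 1) ^ 2 = a ^ 2 - 1 := sq_sqrt (by nlinarith)
  field_simp
  linear_combination -hroot

lemma sub_div_sqrt_two_sq (a b : ℝ) : (a - b / √2) ^ 2 = a ^ 2 + b ^ 2 / 2 - a * b * √2 := by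
  have h : 2 / √2 = √2 := div_sqrt
  rw [sub_sq, div_pow, sq_sqrt zero_le_two]
  linear_combination (-(a * b)) * h

lemma sqrtSinhSubExpHalf_sq {x : ℝ} (hx : 0 ≤ x) :
    sqrtSinhSubExpHalf x ^ 2 = exp x - exp (-x) / 2 - √(exp x ^ 2 - 1) := by
  have hsinh : 0 ≤ sinh x := sinh_nonneg_iff.2 hx
  have hexp_half : exp (x / 2) ^ 2 = exp x := by rw [exp_half, sq_sqrt (exp_pos x).le]
  have hcross : √(sinh x) * exp (x / 2) * √2 = √(exp x ^ 2 - 1) := by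
    rw [exp_half, ← sqrt_mul hsinh, ← sqrt_mul (by positivity), sinh_eq, exp_neg]
    field_simp
  rw [sqrtSinhSubExpHalf, sub_div_sqrt_two_sq, sq_sqrt hsinh, hexp_half, hcross, sinh_eq]
  ring

lemma hasDerivAt_sqrtSinhSubExpHalfSqAntideriv {x : ℝ} (hx : 0 < x) :
    HasDerivAt sqrtSinhSubExpHalfSqAntideriv (sqrtSinhSubExpHalf x ^ 2) x := by
  have hu : 0 < exp x ^ 2 - 1 := by nlinarith [one_lt_exp_iff.2 hx]
  have hroot : √(exp x ^ 2 - 1) ^ 2 = exp x ^ 2 - 1 := sq_sqrt hu.le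
  have hderiv_root : HasDerivAt (fun s => √(exp s ^ 2 - 1))
      (2 * exp x * exp x / (2 * √(exp x ^ 2 - 1))) x := by
    simpa using (((hasDerivAt_exp x).pow 2).sub_const 1).sqrt hu.ne'
  have hderiv_neg : HasDerivAt (fun s => exp (-s)) (-exp (-x)) x := by
    simpa using (hasDerivAt_neg x).exp
  have hderiv := (((hasDerivAt_exp x).add (hderiv_neg.div_const 2)).sub hderiv_root).add
    hderiv_root.arctan
  rw [sqrtSinhSubExpHalf_sq hx.le]
  refine (hderiv.congr_deriv ?_ : HasDerivAt sqrtSinhSubExpHalfSqAntideriv _ x)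
  rw [hroot]
  field_simp
  linear_combination (2 * exp x ^ 2) * hroot

lemma tendsto_sqrtSinhSubExpHalfSqAntideriv :
    Tendsto sqrtSinhSubExpHalfSqAntideriv atTop (𝓝 (π / 2)) := by
  have hroot : Tendsto (fun s => √(exp s ^ 2 - 1)) atTop atTop :=
    tendsto_sqrt_atTop.comp (tendsto_atTop_add_const_right _ _
      ((tendsto_pow_atTop two_ne_zero).comp tendsto_exp_atTop))
  have hgap : Tendsto (fun s => exp s - √(exp s ^ 2 - 1)) atTop (𝓝 0) := by
    refine (tendsto_inv_atTop_zero.comp (tendsto_atTop_mono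
      (g := fun s => exp s + √(exp s ^ 2 - 1)) (fun s => le_add_of_nonneg_right (sqrt_nonneg _))
      tendsto_exp_atTop)).congr' ?_
    filter_upwards [eventually_ge_atTop 0] with s hs
    exact (sub_sqrt_sq_sub_one_eq_inv (one_le_exp hs)).symm
  have := (hgap.add (tendsto_exp_neg_atTop_nhds_zero.div_const 2)).add
    (tendsto_nhds_of_tendsto_nhdsWithin (tendsto_arctan_atTop.comp hroot))
  rw [zero_div, add_zero, zero_add] at this
  refine this.congr fun s => ?_
  simp only [sqrtSinhSubExpHalfSqAntideriv, Function.comp_apply]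
  ring

lemma sqrtSinhSubExpHalfSqAntideriv_zero : sqrtSinhSubExpHalfSqAntideriv 0 = 3 / 2 := by
  norm_num [sqrtSinhSubExpHalfSqAntideriv]

lemma continuous_sqrtSinhSubExpHalfSqAntideriv : Continuous sqrtSinhSubExpHalfSqAntideriv := by
  unfold sqrtSinhSubExpHalfSqAntideriv
  fun_prop

lemma continuous_sqrtSinhSubExpHalf : Continuous sqrtSinhSubExpHalf := by
  unfold sqrtSinhSubExpHalf
  fun_prop

lemma integrableOn_sqrtSinhSubExpHalf_sq :
    IntegrableOn (fun s => sqrtSinhSubExpHalf s ^ 2) (Ioi 0) :=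
  integrableOn_Ioi_deriv_of_nonneg continuous_sqrtSinhSubExpHalfSqAntideriv.continuousWithinAt
    (fun _ hx => hasDerivAt_sqrtSinhSubExpHalfSqAntideriv hx) (fun _ _ => sq_nonneg _)
    tendsto_sqrtSinhSubExpHalfSqAntideriv

lemma integral_sqrtSinhSubExpHalf_sq : ∫ s in Ioi 0, sqrtSinhSubExpHalf s ^ 2 = (π - 3) / 2 := by
  rw [integral_Ioi_of_hasDerivAt_of_nonneg
    continuous_sqrtSinhSubExpHalfSqAntideriv.continuousWithinAt
    (fun _ hx => hasDerivAt_sqrtSinhSubExpHalfSqAntideriv hx) (fun _ _ => sq_nonneg _)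
    tendsto_sqrtSinhSubExpHalfSqAntideriv, sqrtSinhSubExpHalfSqAntideriv_zero]
  ring

lemma memLp_sqrtSinhSubExpHalf : MemLp sqrtSinhSubExpHalf 2 (volume.restrict (Ioi 0)) :=
  (memLp_two_iff_integrable_sq continuous_sqrtSinhSubExpHalf.aestronglyMeasurable).2
    integrableOn_sqrtSinhSubExpHalf_sq

theorem wiener_integral_sqrt_sinh_general
    {Ω : Type*} [MeasurableSpace Ω] (μ : Measure Ω)
    (W : (ℝ → ℝ) → Ω → ℝ)
    (hW : ∀ f : ℝ → ℝ, MemLp f 2 (volume.restrict (Ioi 0)) →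
      Measure.map (W f) μ
        = gaussianReal 0 (ENNReal.ofReal (∫ s in Ioi (0 : ℝ), (f s) ^ 2)).toNNReal) :
    MemLp (fun s : ℝ => Real.sqrt (Real.sinh s) - Real.exp (s / 2) / Real.sqrt 2) 2
      (volume.restrict (Ioi 0)) ∧
    Measure.map (W (fun s : ℝ => Real.sqrt (Real.sinh s) - Real.exp (s / 2) / Real.sqrt 2)) μ
      = gaussianReal 0 (ENNReal.ofReal ((π - 3) / 2)).toNNReal := by
  refine ⟨memLp_sqrtSinhSubExpHalf, ?_⟩
  rw [← integral_sqrtSinhSubExpHalf_sq]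
  exact hW _ memLp_sqrtSinhSubExpHalf

/-- The function `s ↦ √(sinh s) - e^{s/2}/√2` is square-integrable on `(0,∞)`, and hence,
for any Wiener-integral map `W` (sending each `f ∈ L²(0,∞)` to a random variable whose law
is centered Gaussian with variance `∫₀^∞ f²`), the Wiener integral of this function is a
centered Gaussian random variable with variance `(π - 3)/2`. -/
theorem wiener_integral_sqrt_sinh
    {Ω : Type*} [MeasurableSpace Ω] (μ : Measure Ω) [IsProbabilityMeasure μ]
    (W : (ℝ → ℝ) → Ω → ℝ)
    (hW : ∀ f : ℝ → ℝ, MemLp f 2 (volume.restrict (Ioi 0)) →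
      Measure.map (W f) μ
        = gaussianReal 0 (ENNReal.ofReal (∫ s in Ioi (0 : ℝ), (f s) ^ 2)).toNNReal) :
    MemLp (fun s : ℝ => Real.sqrt (Real.sinh s) - Real.exp (s / 2) / Real.sqrt 2) 2
      (volume.restrict (Ioi 0)) ∧
    Measure.map (W (fun s : ℝ => Real.sqrt (Real.sinh s) - Real.exp (s / 2) / Real.sqrt 2)) μ
      = gaussianReal 0 (ENNReal.ofReal ((π - 3) / 2)).toNNReal :=
  wiener_integral_sqrt_sinh_general μ W hW
end

section
/- The function a ↦ ∫₀¹ u^{-a}(√(1-u) - 1)² du, initially defined and holomorphic for 0 < Re(a) < 1, extends analytically to {Re(a) < 3}, and at a = 3/2 the extension equals 2(π - 3). -/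
open MeasureTheory Real Set Complex Filter Asymptotics

noncomputable def ff : ℝ → ℂ :=
  Set.indicator (Set.Iio 1) (fun t => (((Real.sqrt (1 - t) - 1 : ℝ)) : ℂ) ^ 2)

lemma ff_cont : Continuous (fun t : ℝ => (((Real.sqrt (1 - t) - 1 : ℝ)) : ℂ) ^ 2) := by
  fun_prop

lemma mellin_ff_eq (a : ℂ) : mellin ff (1 - a) =
    ∫ u in Ioo (0 : ℝ) 1, (u : ℂ) ^ (-a) * (((Real.sqrt (1 - u) - 1 : ℝ)) : ℂ) ^ 2 := by
  rw [mellin]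
  have h1 : ∀ t : ℝ, (t:ℂ) ^ (1 - a - 1) • ff t
      = (Iio (1:ℝ)).indicator
          (fun u => (u:ℂ) ^ (-a) * (((Real.sqrt (1 - u) - 1 : ℝ)) : ℂ) ^ 2) t := by
    intro t
    rw [ff]
    by_cases ht : t ∈ Iio (1:ℝ) <;>
      simp [ht, smul_eq_mul, Set.indicator_of_mem, Set.indicator_of_notMem]
  simp_rw [h1]
  rw [setIntegral_indicator measurableSet_Iio, Set.Ioi_inter_Iio]

lemma ff_loc : MeasureTheory.LocallyIntegrableOn ff (Ioi 0) := by
  apply MeasureTheory.IntegrableOn.locallyIntegrableOn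
  rw [ff, IntegrableOn, integrable_indicator_iff measurableSet_Iio]
  rw [IntegrableOn, Measure.restrict_restrict measurableSet_Iio, Set.Iio_inter_Ioi]
  exact (ff_cont.integrableOn_Icc (a := 0) (b := 1)).mono_set Ioo_subset_Icc_self

lemma ff_top (c : ℝ) : ff =O[atTop] (fun x : ℝ => x ^ (-c)) := by
  have h : ff =ᶠ[atTop] (fun _ => (0:ℂ)) := by
    filter_upwards [eventually_ge_atTop (1:ℝ)] with t ht
    simp [ff, Set.indicator_of_notMem, not_lt.mpr ht]
  exact h.trans_isBigO (isBigO_zero _ _)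

lemma sqrt_bound {t : ℝ} (h0 : 0 ≤ t) (h1 : t ≤ 1) : |Real.sqrt (1 - t) - 1| ≤ t := by
  have hnn : (0:ℝ) ≤ 1 - t := by linarith
  have hle : Real.sqrt (1 - t) ≤ 1 := by
    nlinarith [Real.sq_sqrt hnn, Real.sqrt_nonneg (1 - t)]
  have hge : 1 - t ≤ Real.sqrt (1 - t) := by
    nlinarith [Real.sq_sqrt hnn, Real.sqrt_nonneg (1 - t)]
  rw [abs_sub_comm, _root_.abs_of_nonneg (show (0:ℝ) ≤ 1 - Real.sqrt (1 - t) by linarith)]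
  linarith

lemma ff_bot : ff =O[nhdsWithin 0 (Ioi 0)] (fun x : ℝ => x ^ (-(-2:ℝ))) := by
  rw [isBigO_iff]
  refine ⟨1, ?_⟩
  filter_upwards [Ioo_mem_nhdsGT_of_mem (by norm_num : (0:ℝ) ∈ Ico 0 1)] with t ht
  have h0 := ht.1; have h1 := ht.2
  rw [ff, Set.indicator_of_mem (mem_Iio.mpr h1)]
  have e1 : ‖(((Real.sqrt (1 - t) - 1 : ℝ)) : ℂ) ^ 2‖ = |Real.sqrt (1 - t) - 1| ^ 2 := by
    rw [norm_pow, Complex.norm_real, Real.norm_eq_abs]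
  have e2 : t ^ (-(-2:ℝ)) = t ^ 2 := by
    rw [neg_neg, show ((2:ℝ) = ((2:ℕ):ℝ)) by norm_num, Real.rpow_natCast]
  have e3 : ‖t ^ (2:ℕ)‖ = t ^ 2 := by
    rw [Real.norm_eq_abs]; exact _root_.abs_of_nonneg (by positivity)
  rw [e1, e2, e3, one_mul]
  have hb := sqrt_bound h0.le h1.le
  nlinarith [abs_nonneg (Real.sqrt (1 - t) - 1)]

lemma mellin_ff_diff : DifferentiableOn ℂ (fun z => mellin ff (1 - z)) {a : ℂ | a.re < 3} := by
  intro a ha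
  refine DifferentiableAt.differentiableWithinAt ?_
  have ha' : a.re < 3 := ha
  have hre : -2 < (1 - a).re := by simp [Complex.sub_re]; linarith
  have hd : DifferentiableAt ℂ (mellin ff) (1 - a) :=
    mellin_differentiableAt_of_isBigO_rpow (a := (1 - a).re + 1) (b := -2)
      ff_loc (ff_top _) (by linarith) ff_bot hre
  exact hd.comp a ((differentiable_const (1:ℂ)).sub differentiable_id).differentiableAt

noncomputable def FF : ℝ → ℝ := fun u =>
  -4 * Real.sqrt u / (1 + Real.sqrt (1 - u)) - 2 * Real.sqrt u + 4 * Real.arcsin (Real.sqrt u)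

lemma FF_deriv {x : ℝ} (hx : x ∈ Ioo (0:ℝ) 1) :
    HasDerivAt FF (x ^ (-(3:ℝ)/2) * (Real.sqrt (1 - x) - 1)^2) x := by
  obtain ⟨h0, h1⟩ := hx
  set s := Real.sqrt x with hs_def
  set c := Real.sqrt (1 - x) with hc_def
  have hs : 0 < s := Real.sqrt_pos.mpr h0
  have hc : 0 < c := Real.sqrt_pos.mpr (by linarith)
  have hs2 : s ^ 2 = x := Real.sq_sqrt h0.le
  have hc2 : c ^ 2 = 1 - x := Real.sq_sqrt (by linarith)
  have hs1 : s < 1 := by nlinarith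
  have hden : (0:ℝ) < 1 + c := by linarith
  have h_s : HasDerivAt Real.sqrt (1 / (2 * s)) x := Real.hasDerivAt_sqrt h0.ne'
  have h_c : HasDerivAt (fun u : ℝ => Real.sqrt (1 - u)) (-(1 / (2 * c))) x := by
    have inner : HasDerivAt (fun u : ℝ => 1 - u) (-1) x := (hasDerivAt_id x).const_sub 1
    have : HasDerivAt (fun u : ℝ => Real.sqrt (1 - u)) (1 / (2 * c) * -1) x :=
      (Real.hasDerivAt_sqrt (show (1:ℝ) - x ≠ 0 by linarith)).comp x inner
    convert this using 1
    ring
  have h_num : HasDerivAt (fun u : ℝ => -4 * Real.sqrt u) (-4 * (1 / (2 * s))) x :=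
    h_s.const_mul (-4)
  have h_den : HasDerivAt (fun u : ℝ => 1 + Real.sqrt (1 - u)) (-(1 / (2 * c))) x :=
    h_c.const_add 1
  have h_q : HasDerivAt (fun u : ℝ => -4 * Real.sqrt u / (1 + Real.sqrt (1 - u)))
      ((-4 * (1 / (2 * s)) * (1 + c) - (-4 * s) * (-(1 / (2 * c)))) / (1 + c) ^ 2) x :=
    h_num.div h_den hden.ne'
  have h_lin : HasDerivAt (fun u : ℝ => 2 * Real.sqrt u) (2 * (1 / (2 * s))) x :=
    h_s.const_mul 2
  have h_arc : HasDerivAt (fun u : ℝ => 4 * Real.arcsin (Real.sqrt u))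
      (4 * (1 / Real.sqrt (1 - s ^ 2) * (1 / (2 * s)))) x := by
    have harc : HasDerivAt Real.arcsin (1 / Real.sqrt (1 - s ^ 2)) s :=
      Real.hasDerivAt_arcsin (by linarith) (by linarith)
    exact ((harc.comp x h_s)).const_mul 4
  have hD : HasDerivAt FF
      ((-4 * (1 / (2 * s)) * (1 + c) - (-4 * s) * (-(1 / (2 * c)))) / (1 + c) ^ 2
        - 2 * (1 / (2 * s)) + 4 * (1 / Real.sqrt (1 - s ^ 2) * (1 / (2 * s)))) x :=
    (h_q.sub h_lin).add h_arc
  convert hD using 1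
  have hsc : Real.sqrt (1 - s ^ 2) = c := by rw [hs2]
  rw [hsc]
  have hxpow : x ^ (-(3:ℝ)/2) = (s ^ 3)⁻¹ := by
    rw [← hs2, ← Real.rpow_natCast s 2, ← Real.rpow_mul hs.le,
      show ((2:ℕ):ℝ) * (-3/2) = -(3:ℝ) by norm_num, Real.rpow_neg hs.le,
      show ((3:ℝ)) = ((3:ℕ):ℝ) by norm_num, Real.rpow_natCast]
  rw [hxpow]
  have hc2' : c ^ 2 = 1 - s ^ 2 := by rw [hs2, hc2]
  field_simp
  linear_combination (2*c^3 - 2*c + 4*s^2) * hc2'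

lemma FF_cont : Continuous FF := by
  have hden : ∀ x : ℝ, 1 + Real.sqrt (1 - x) ≠ 0 := by
    intro x
    have := Real.sqrt_nonneg (1 - x)
    positivity
  apply Continuous.add
  · apply Continuous.sub
    · exact ((continuous_const.mul Real.continuous_sqrt).div
        (continuous_const.add (Real.continuous_sqrt.comp (continuous_const.sub continuous_id)))
        hden)
    · fun_prop
  · exact continuous_const.mul (Real.continuous_arcsin.comp Real.continuous_sqrt)

lemma phi_int : IntervalIntegrable
    (fun u : ℝ => u ^ (-(3:ℝ)/2) * (Real.sqrt (1 - u) - 1)^2) volume 0 1 := by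
  rw [intervalIntegrable_iff_integrableOn_Ioc_of_le zero_le_one]
  apply Integrable.mono' (integrable_const (1:ℝ))
  · apply ContinuousOn.aestronglyMeasurable _ measurableSet_Ioc
    apply ContinuousOn.mul
    · exact fun u hu => (Real.continuousAt_rpow_const u _ (Or.inl hu.1.ne')).continuousWithinAt
    · fun_prop
  · rw [ae_restrict_iff' measurableSet_Ioc]
    refine Eventually.of_forall fun u hu => ?_
    obtain ⟨h0, h1⟩ := hu
    have hb := sqrt_bound h0.le h1
    have hsq : (Real.sqrt (1 - u) - 1)^2 ≤ u^2 := by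
      nlinarith [abs_nonneg (Real.sqrt (1 - u) - 1), _root_.sq_abs (Real.sqrt (1 - u) - 1)]
    have key : u ^ (-(3:ℝ)/2) * (Real.sqrt (1 - u) - 1)^2 ≤ 1 := by
      have h2 : u ^ (-(3:ℝ)/2) * (Real.sqrt (1 - u) - 1)^2 ≤ u ^ (-(3:ℝ)/2) * u^2 :=
        mul_le_mul_of_nonneg_left hsq (Real.rpow_nonneg h0.le _)
      have h3 : u ^ (-(3:ℝ)/2) * u^2 = u ^ ((1:ℝ)/2) := by
        rw [show (u:ℝ)^2 = u ^ ((2:ℕ):ℝ) by rw [Real.rpow_natCast],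
          ← Real.rpow_add h0]
        norm_num
      have h4 : u ^ ((1:ℝ)/2) ≤ 1 := Real.rpow_le_one h0.le h1 (by norm_num)
      linarith
    have hpos : 0 ≤ u ^ (-(3:ℝ)/2) * (Real.sqrt (1 - u) - 1)^2 := by positivity
    rw [Real.norm_eq_abs, _root_.abs_of_nonneg hpos]
    simpa using key

lemma real_integral :
    ∫ u in Ioo (0:ℝ) 1, u ^ (-(3:ℝ)/2) * (Real.sqrt (1 - u) - 1)^2
      = 2 * (Real.pi - 3) := by
  have hftc := intervalIntegral.integral_eq_sub_of_hasDerivAt_of_le zero_le_one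
    FF_cont.continuousOn (fun x hx => FF_deriv hx) phi_int
  rw [← integral_Ioc_eq_integral_Ioo, ← intervalIntegral.integral_of_le zero_le_one, hftc]
  have h0 : FF 0 = 0 := by
    simp [FF, Real.sqrt_zero, Real.arcsin_zero]
  have h1 : FF 1 = 2 * Real.pi - 6 := by
    simp [FF, Real.sqrt_one, Real.sqrt_zero, Real.arcsin_one]
    ring
  rw [h0, h1]
  ring

/-- The function `a ↦ ∫₀¹ u^{-a} (√(1-u) - 1)² du`, initially defined (and holomorphic)
for `0 < Re a < 1`, extends analytically to the half-plane `{Re a < 3}`, and the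
extension evaluated at `a = 3/2` equals `2(π - 3)`. -/
theorem analytic_continuation_integral :
    ∃ g : ℂ → ℂ,
      DifferentiableOn ℂ g {a : ℂ | a.re < 3} ∧
      (∀ a : ℂ, 0 < a.re → a.re < 1 →
        g a = ∫ u in Ioo (0 : ℝ) 1,
          (u : ℂ) ^ (-a) * (((Real.sqrt (1 - u) - 1 : ℝ)) : ℂ) ^ 2) ∧
      g (3 / 2) = 2 * (Real.pi - 3) := by
  refine ⟨fun z => mellin ff (1 - z), mellin_ff_diff, fun a _ _ => mellin_ff_eq a, ?_⟩
  show mellin ff (1 - 3/2) = _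
  rw [mellin_ff_eq (3/2)]
  have hcongr : ∫ u in Ioo (0 : ℝ) 1,
      (u : ℂ) ^ (-(3/2 : ℂ)) * (((Real.sqrt (1 - u) - 1 : ℝ)) : ℂ) ^ 2
      = ∫ u in Ioo (0 : ℝ) 1,
        (((u ^ (-(3:ℝ)/2) * (Real.sqrt (1 - u) - 1)^2 : ℝ)) : ℂ) := by
    refine setIntegral_congr_fun measurableSet_Ioo fun u hu => ?_
    have h0 := hu.1
    rw [Complex.ofReal_mul, Complex.ofReal_pow,
      Complex.ofReal_cpow h0.le]
    push_cast
    norm_num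
  rw [hcongr]
  have hofr : (∫ u in Ioo (0:ℝ) 1,
      (((u ^ (-(3:ℝ)/2) * (Real.sqrt (1 - u) - 1)^2 : ℝ)) : ℂ))
      = ((∫ u in Ioo (0:ℝ) 1, u ^ (-(3:ℝ)/2) * (Real.sqrt (1 - u) - 1)^2 : ℝ) : ℂ) :=
    integral_ofReal
  rw [hofr, real_integral]
  push_cast
  ring
end
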